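/- arXiv:2603.21602 — 3 statements merged into one kernel-verified Lean document; each statement's English description precedes it below -/
import Mathlib

section
/- There is an absolute constant C > 0 such that for every λ > 1 and all real numbers 1/2 ≤ r₁ < r₂, one has ‖χ_{Ω_{r₁,r₂}} W⁴·W_λ‖_{L¹L²} ≤ C · λ^(−1/2) · (r₂ − r₁)^(1/2) · r₁^(−2) and ‖χ_{Ω_{r₁,r₂}} W³·W_λ²‖_{L¹L²} ≤ C · λ^(−1) · (r₂ − r₁)^(1/2) · r₁^(−1). -/
open MeasureTheory Real Set

noncomputable section

/-- The ground state `W(x) = (1/3 + |x|^2)^(-1/2)` on `ℝ³`. -/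
def W3 (x : EuclideanSpace ℝ (Fin 3)) : ℝ := (1/3 + ‖x‖^2) ^ (-(1:ℝ)/2)

/-- The rescaled ground state `W_λ(x) = λ^(-1/2) W(x/λ)`. -/
def Wlam (lam : ℝ) (x : EuclideanSpace ℝ (Fin 3)) : ℝ := lam ^ (-(1:ℝ)/2) * W3 (lam⁻¹ • x)

/-- The Strichartz norm `‖χ_Ψ u‖_Y = (∫ (∫_{(x,t)∈Ψ} |u|^10 dx)^(1/2) dt)^(1/5)`. -/
def Ynorm (Ψ : Set (EuclideanSpace ℝ (Fin 3) × ℝ))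
    (u : EuclideanSpace ℝ (Fin 3) → ℝ → ℝ) : ℝ :=
  (∫ t : ℝ, (∫ x in {x | (x, t) ∈ Ψ}, |u x t| ^ 10) ^ ((1:ℝ)/2)) ^ ((1:ℝ)/5)

/-- The norm `‖χ_Ψ u‖_{L¹L²} = ∫ (∫_{(x,t)∈Ψ} |u|² dx)^(1/2) dt`. -/
def L1L2 (Ψ : Set (EuclideanSpace ℝ (Fin 3) × ℝ))
    (u : EuclideanSpace ℝ (Fin 3) → ℝ → ℝ) : ℝ :=
  ∫ t : ℝ, (∫ x in {x | (x, t) ∈ Ψ}, (u x t) ^ 2) ^ ((1:ℝ)/2)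

/-- The channel region `Ω_{r₁,r₂} = {(x,t) : |t| + r₁ < |x| < |t| + r₂}`. -/
def channel (r₁ r₂ : ℝ) : Set (EuclideanSpace ℝ (Fin 3) × ℝ) :=
  {p | |p.2| + r₁ < ‖p.1‖ ∧ ‖p.1‖ < |p.2| + r₂}

/-- The radial free wave with radiation profile `G` (in the negative time direction):
`v(x,t) = |x|⁻¹ ∫_{t-|x|}^{t+|x|} G(s) ds`. -/
def freeWave (G : ℝ → ℝ) (x : EuclideanSpace ℝ (Fin 3)) (t : ℝ) : ℝ :=
  ‖x‖⁻¹ * ∫ s in (t - ‖x‖)..(t + ‖x‖), G s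

/-- `‖G‖_{L²(E)} = (∫_E |G|²)^(1/2)`. -/
def L2on (G : ℝ → ℝ) (E : Set ℝ) : ℝ := (∫ s in E, (G s)^2) ^ ((1:ℝ)/2)

/-- The set whose supremum is `sup_{0<r<λ} (λ/r) ∫_{-r}^r |G(s)|² ds`. -/
def tauA (G : ℝ → ℝ) (lam : ℝ) : Set ℝ :=
  {A | ∃ r, 0 < r ∧ r < lam ∧ A = (lam / r) * ∫ s in (-r)..r, (G s)^2}

/-- The set whose supremum is `sup_{r>0} r^(-1/2) ∫_{-r}^r |G(s)| ds`. -/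
def tauB (G : ℝ → ℝ) : Set ℝ :=
  {B | ∃ r, 0 < r ∧ B = (∫ s in (-r)..r, |G s|) / Real.sqrt r}

/-- `τ = (sup_{0<r<λ} (λ/r)∫_{-r}^r |G|²)^(1/2) + sup_{r>0} r^(-1/2)∫_{-r}^r |G|`. -/
def tau (G : ℝ → ℝ) (lam : ℝ) : ℝ := Real.sqrt (sSup (tauA G lam)) + sSup (tauB G)

/-!
Both functions are bounded by `M |x|^{-(k+1)}` (`k = 3`, resp. `2`), using `W ≤ |x|⁻¹` and
`W_λ ≤ √3 λ^{-1/2}`. On the time-`t` slice of the channel, `|t| + r₁ < |x| < |t| + r₂`, this is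
at most `M (|t| + r₁)^{-k} |x|⁻¹`, and in polar coordinates `|x|⁻²` integrates over that annulus
to `4π (r₂ - r₁)` (here `4π = 3 |B₁|`). So each slice has `L²` norm
`≲ M (r₂ - r₁)^{1/2} (|t| + r₁)^{-k}`, whose integral in `t` is `2 r₁^{1-k} / (k - 1)`.
-/

open Metric Module

section Annulus

variable {E : Type*} [NormedAddCommGroup E] [MeasurableSpace E] [BorelSpace E] (μ : Measure E)

theorem integrableOn_annulus_norm_rpow [ProperSpace E] [IsFiniteMeasureOnCompacts μ] {a : ℝ}
    (ha : 0 < a) (b s : ℝ) : IntegrableOn (fun x : E => ‖x‖ ^ s) ((‖·‖) ⁻¹' Ioo a b) μ := by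
  have hK : IsCompact (closedBall (0 : E) b \ ball 0 a) :=
    (isCompact_closedBall 0 b).diff isOpen_ball
  refine (ContinuousOn.integrableOn_compact hK fun x hx => ?_).mono_set fun x hx => ?_
  · have hax : a ≤ ‖x‖ := by simpa using hx.2
    exact (continuous_norm.continuousAt.rpow_const
      (Or.inl (ha.trans_le hax).ne')).continuousWithinAt
  · simp only [mem_preimage, mem_Ioo] at hx
    simp [hx.1.le, hx.2.le]

theorem integral_annulus_norm_rpow_one_sub_finrank [NormedSpace ℝ E] [Nontrivial E]
    [FiniteDimensional ℝ E] [μ.IsAddHaarMeasure] {a b : ℝ} (ha : 0 ≤ a) (hab : a ≤ b) :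
    ∫ x in (‖·‖) ⁻¹' Ioo a b, ‖x‖ ^ (1 - (finrank ℝ E : ℝ)) ∂μ
      = finrank ℝ E * μ.real (ball 0 1) * (b - a) := by
  set n := finrank ℝ E
  have hn : 1 ≤ n := finrank_pos
  have hind : ((‖·‖) ⁻¹' Ioo a b).indicator (fun x : E => ‖x‖ ^ (1 - (n : ℝ)))
      = fun x => (Ioo a b).indicator (· ^ (1 - (n : ℝ))) ‖x‖ :=
    funext fun _ => indicator_comp_right (‖·‖) (g := (· ^ (1 - (n : ℝ))))
  have hweight : ∀ y ∈ Ioi (0 : ℝ),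
      y ^ (n - 1) • (Ioo a b).indicator (· ^ (1 - (n : ℝ))) y = (Ioo a b).indicator 1 y := by
    intro y (hy : 0 < y)
    by_cases hyab : y ∈ Ioo a b
    · rw [indicator_of_mem hyab, indicator_of_mem hyab, smul_eq_mul, ← rpow_natCast,
        Nat.cast_sub hn, ← rpow_add hy]
      simp
    · simp [hyab]
  rw [← integral_indicator (measurableSet_Ioo.preimage measurable_norm), hind,
    integral_fun_norm_addHaar μ, setIntegral_congr_fun measurableSet_Ioi hweight,
    integral_indicator_one measurableSet_Ioo, measureReal_restrict_apply measurableSet_Ioo,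
    inter_eq_left.2 (Ioo_subset_Ioi_self.trans (Ioi_subset_Ioi ha)),
    Real.volume_real_Ioo_of_le hab, nsmul_eq_mul, smul_eq_mul, mul_assoc]

end Annulus

theorem integrable_abs_add_rpow_neg {q r : ℝ} (hq : 1 < q) (hr : 0 < r) :
    Integrable fun t : ℝ => (|t| + r) ^ (-q) := by
  have h := ((integrable_one_add_norm (E := ℝ) (μ := volume) (by simpa using hq)).comp_div
    hr.ne').const_mul (r ^ (-q))
  refine h.congr (Filter.Eventually.of_forall fun t => ?_)
  simp only [norm_div, Real.norm_eq_abs, abs_of_pos hr]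
  rw [← mul_rpow hr.le (by positivity), mul_add, mul_div_cancel₀ _ hr.ne', mul_one, add_comm]

theorem integral_abs_add_rpow_neg {q r : ℝ} (hq : 1 < q) (hr : 0 < r) :
    ∫ t : ℝ, (|t| + r) ^ (-q) = 2 * r ^ (1 - q) / (q - 1) := by
  have hshift : ∫ t in Ioi (0 : ℝ), (t + r) ^ (-q) = ∫ s in Ioi r, s ^ (-q) := by
    have := (measurePreserving_add_right volume r).setIntegral_preimage_emb
      (measurableEmbedding_addRight r) (fun s => s ^ (-q)) (Ioi r)
    simpa using this
  rw [integral_comp_abs (f := fun s => (s + r) ^ (-q)), hshift,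
    integral_Ioi_rpow_of_lt (by linarith) hr, show -q + 1 = -(q - 1) by ring, neg_div_neg_eq,
    neg_sub, mul_div_assoc]

local notation "ℝ³" => EuclideanSpace ℝ (Fin 3)

theorem sqrt_integral_annulus_sq_le {u : ℝ³ → ℝ} {M a b : ℝ} {k : ℕ}
    (hu : ∀ x, x ≠ 0 → |u x| ≤ M * ‖x‖⁻¹ ^ (k + 1)) (hM : 0 ≤ M) (ha : 0 < a) (hab : a ≤ b) :
    √(∫ x in (‖·‖ : ℝ³ → ℝ) ⁻¹' Ioo a b, u x ^ 2)
      ≤ M * a⁻¹ ^ k * √(3 * volume.real (ball (0 : ℝ³) 1) * (b - a)) := by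
  have hweight : ∫ x in (‖·‖ : ℝ³ → ℝ) ⁻¹' Ioo a b, ‖x‖ ^ (-2 : ℝ)
      = 3 * volume.real (ball (0 : ℝ³) 1) * (b - a) := by
    have h := integral_annulus_norm_rpow_one_sub_finrank (volume : Measure ℝ³) ha.le hab
    rwa [finrank_euclideanSpace_fin, Nat.cast_ofNat, show (1 : ℝ) - 3 = -2 by norm_num] at h
  have hpt : ∀ x ∈ (‖·‖ : ℝ³ → ℝ) ⁻¹' Ioo a b, u x ^ 2 ≤ (M * a⁻¹ ^ k) ^ 2 * ‖x‖ ^ (-2 : ℝ) := by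
    intro x hx
    have hx0 : 0 < ‖x‖ := ha.trans hx.1
    have habs : |u x| ≤ M * a⁻¹ ^ k * ‖x‖⁻¹ :=
      calc |u x| ≤ M * ‖x‖⁻¹ ^ (k + 1) := hu x (norm_pos_iff.1 hx0)
        _ = M * ‖x‖⁻¹ ^ k * ‖x‖⁻¹ := by ring
        _ ≤ M * a⁻¹ ^ k * ‖x‖⁻¹ := by gcongr; exact hx.1.le
    calc u x ^ 2 = |u x| ^ 2 := (sq_abs _).symm
      _ ≤ (M * a⁻¹ ^ k * ‖x‖⁻¹) ^ 2 := pow_le_pow_left₀ (abs_nonneg _) habs 2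
      _ = (M * a⁻¹ ^ k) ^ 2 * ‖x‖ ^ (-2 : ℝ) := by
        rw [rpow_neg hx0.le, rpow_two]; ring
  have hint := integral_mono_of_nonneg (Filter.Eventually.of_forall fun x => sq_nonneg (u x))
    ((integrableOn_annulus_norm_rpow volume ha b (-2)).const_mul ((M * a⁻¹ ^ k) ^ 2))
    (ae_restrict_of_forall_mem (measurableSet_Ioo.preimage measurable_norm) hpt)
  rw [integral_const_mul, hweight] at hint
  calc √(∫ x in (‖·‖ : ℝ³ → ℝ) ⁻¹' Ioo a b, u x ^ 2)
      ≤ √((M * a⁻¹ ^ k) ^ 2 * (3 * volume.real (ball (0 : ℝ³) 1) * (b - a))) :=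
        sqrt_le_sqrt hint
    _ = M * a⁻¹ ^ k * √(3 * volume.real (ball (0 : ℝ³) 1) * (b - a)) := by
      rw [sqrt_mul' _ (mul_nonneg (by positivity) (sub_nonneg.2 hab)), sqrt_sq (by positivity)]

theorem L1L2_channel_le {u : ℝ³ → ℝ} {M r₁ r₂ : ℝ} {k : ℕ}
    (hu : ∀ x, x ≠ 0 → |u x| ≤ M * ‖x‖⁻¹ ^ (k + 1)) (hM : 0 ≤ M) (hk : 1 < k) (hr₁ : 0 < r₁)
    (hr : r₁ ≤ r₂) :
    L1L2 (channel r₁ r₂) (fun x _ => u x)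
      ≤ M * √(3 * volume.real (ball (0 : ℝ³) 1)) * (r₂ - r₁) ^ ((1 : ℝ) / 2)
        * (2 * r₁ ^ (1 - (k : ℝ)) / (k - 1)) := by
  set K := M * √(3 * volume.real (ball (0 : ℝ³) 1)) * (r₂ - r₁) ^ ((1 : ℝ) / 2)
  have hslice : ∀ t : ℝ, (∫ x in {x | (x, t) ∈ channel r₁ r₂}, u x ^ 2) ^ ((1 : ℝ) / 2)
      ≤ K * (|t| + r₁) ^ (-(k : ℝ)) := by
    intro t
    have ha : 0 < |t| + r₁ := by positivity
    have h := sqrt_integral_annulus_sq_le hu hM ha (by linarith : |t| + r₁ ≤ |t| + r₂)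
    rw [show |t| + r₂ - (|t| + r₁) = r₂ - r₁ by ring,
      sqrt_mul' _ (sub_nonneg.2 hr), sqrt_eq_rpow (r₂ - r₁)] at h
    rw [← sqrt_eq_rpow, rpow_neg ha.le, rpow_natCast, ← inv_pow]
    calc _ ≤ _ := h
      _ = _ := by ring
  calc L1L2 (channel r₁ r₂) (fun x _ => u x) ≤ ∫ t : ℝ, K * (|t| + r₁) ^ (-(k : ℝ)) :=
        integral_mono_of_nonneg
          (.of_forall fun _ => rpow_nonneg (integral_nonneg fun _ => sq_nonneg _) _)
          ((integrable_abs_add_rpow_neg (by exact_mod_cast hk) hr₁).const_mul K)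
          (.of_forall hslice)
    _ = K * (2 * r₁ ^ (1 - (k : ℝ)) / (k - 1)) := by
      rw [integral_const_mul, integral_abs_add_rpow_neg (by exact_mod_cast hk) hr₁]

theorem W3_eq_inv_sqrt (x : ℝ³) : W3 x = (√(1 / 3 + ‖x‖ ^ 2))⁻¹ := by
  rw [W3, neg_div, rpow_neg (by positivity), sqrt_eq_rpow]

theorem W3_nonneg (x : ℝ³) : 0 ≤ W3 x := by
  rw [W3_eq_inv_sqrt]; positivity

theorem W3_le_sqrt_three (x : ℝ³) : W3 x ≤ √3 :=
  calc W3 x = (√(1 / 3 + ‖x‖ ^ 2))⁻¹ := W3_eq_inv_sqrt x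
    _ ≤ (√(1 / 3))⁻¹ :=
      inv_anti₀ (by positivity) (sqrt_le_sqrt (le_add_of_nonneg_right (sq_nonneg _)))
    _ = √3 := by rw [one_div, sqrt_inv, inv_inv]

theorem W3_le_inv_norm {x : ℝ³} (hx : x ≠ 0) : W3 x ≤ ‖x‖⁻¹ := by
  rw [W3_eq_inv_sqrt]
  exact inv_anti₀ (norm_pos_iff.2 hx) ((le_sqrt (norm_nonneg x) (by positivity)).2 (by linarith))

theorem Wlam_nonneg {lam : ℝ} (hlam : 0 ≤ lam) (x : ℝ³) : 0 ≤ Wlam lam x :=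
  mul_nonneg (rpow_nonneg hlam _) (W3_nonneg _)

theorem Wlam_le {lam : ℝ} (hlam : 0 ≤ lam) (x : ℝ³) :
    Wlam lam x ≤ √3 * lam ^ (-(1 : ℝ) / 2) := by
  rw [Wlam, mul_comm]
  exact mul_le_mul_of_nonneg_right (W3_le_sqrt_three _) (rpow_nonneg hlam _)

theorem abs_W3_pow_four_mul_Wlam_le {lam : ℝ} (hlam : 0 ≤ lam) {x : ℝ³} (hx : x ≠ 0) :
    |W3 x ^ 4 * Wlam lam x| ≤ √3 * lam ^ (-(1 : ℝ) / 2) * ‖x‖⁻¹ ^ 4 := by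
  rw [abs_of_nonneg (mul_nonneg (pow_nonneg (W3_nonneg x) 4) (Wlam_nonneg hlam x)),
    mul_comm (√3 * _)]
  exact mul_le_mul (pow_le_pow_left₀ (W3_nonneg x) (W3_le_inv_norm hx) 4) (Wlam_le hlam x)
    (Wlam_nonneg hlam x) (by positivity)

theorem abs_W3_pow_three_mul_Wlam_sq_le {lam : ℝ} (hlam : 0 < lam) {x : ℝ³} (hx : x ≠ 0) :
    |W3 x ^ 3 * Wlam lam x ^ 2| ≤ 3 * lam⁻¹ * ‖x‖⁻¹ ^ 3 := by
  have hsq : (√3 * lam ^ (-(1 : ℝ) / 2)) ^ 2 = 3 * lam⁻¹ := by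
    rw [mul_pow, sq_sqrt (by norm_num), ← rpow_natCast, ← rpow_mul hlam.le]
    norm_num [rpow_neg_one]
  rw [abs_of_nonneg (mul_nonneg (pow_nonneg (W3_nonneg x) 3) (sq_nonneg _)),
    mul_comm (3 * _), ← hsq]
  exact mul_le_mul (pow_le_pow_left₀ (W3_nonneg x) (W3_le_inv_norm hx) 3)
    (pow_le_pow_left₀ (Wlam_nonneg hlam.le x) (Wlam_le hlam.le x) 2) (sq_nonneg _)
    (by positivity)

theorem stmt2 :
    ∃ C : ℝ, 0 < C ∧ ∀ lam r₁ r₂ : ℝ, 1 < lam → 1/2 ≤ r₁ → r₁ < r₂ →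
      L1L2 (channel r₁ r₂) (fun x _ => (W3 x)^4 * Wlam lam x)
        ≤ C * lam ^ (-(1:ℝ)/2) * (r₂ - r₁) ^ ((1:ℝ)/2) * r₁ ^ (-(2:ℝ)) ∧
      L1L2 (channel r₁ r₂) (fun x _ => (W3 x)^3 * (Wlam lam x)^2)
        ≤ C * lam⁻¹ * (r₂ - r₁) ^ ((1:ℝ)/2) * r₁⁻¹ := by
  set c := volume.real (ball (0 : ℝ³) 1)
  have hc : 0 < c := ENNReal.toReal_pos (measure_ball_pos volume 0 one_pos).ne'
    measure_ball_lt_top.ne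
  refine ⟨6 * √(3 * c), by positivity, fun lam r₁ r₂ hlam hr₁ hr => ⟨?_, ?_⟩⟩
  · calc _ ≤ √3 * lam ^ (-(1 : ℝ) / 2) * √(3 * c) * (r₂ - r₁) ^ ((1 : ℝ) / 2)
          * (2 * r₁ ^ (1 - ((3 : ℕ) : ℝ)) / ((3 : ℕ) - 1)) :=
        L1L2_channel_le (fun x hx => abs_W3_pow_four_mul_Wlam_le (by linarith) hx)
          (by positivity) (by norm_num) (by linarith) hr.le
      _ ≤ 6 * √(3 * c) * lam ^ (-(1 : ℝ) / 2) * (r₂ - r₁) ^ ((1 : ℝ) / 2) * r₁ ^ (-(2 : ℝ)) := by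
        have h36 : √3 ≤ 6 := sqrt_le_iff.2 ⟨by norm_num, by norm_num⟩
        have htime : 2 * r₁ ^ (1 - ((3 : ℕ) : ℝ)) / ((3 : ℕ) - 1) = r₁ ^ (-(2 : ℝ)) := by
          norm_num
        have hX : 0 ≤ √(3 * c) * lam ^ (-(1 : ℝ) / 2) * (r₂ - r₁) ^ ((1 : ℝ) / 2)
            * r₁ ^ (-(2 : ℝ)) := by positivity
        rw [htime]
        linarith [mul_le_mul_of_nonneg_right h36 hX]
  · calc _ ≤ 3 * lam⁻¹ * √(3 * c) * (r₂ - r₁) ^ ((1 : ℝ) / 2)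
          * (2 * r₁ ^ (1 - ((2 : ℕ) : ℝ)) / ((2 : ℕ) - 1)) :=
        L1L2_channel_le (fun x hx => abs_W3_pow_three_mul_Wlam_sq_le (by linarith) hx)
          (by positivity) (by norm_num) (by linarith) hr.le
      _ = 6 * √(3 * c) * lam⁻¹ * (r₂ - r₁) ^ ((1 : ℝ) / 2) * r₁⁻¹ := by
        rw [show 1 - ((2 : ℕ) : ℝ) = -1 by norm_num, rpow_neg_one]
        push_cast
        ring
end
end

section
/- There is an absolute constant C > 0 such that for every λ > 1, one has ‖χ_{Ω₀} W⁴·W_λ‖_{L¹L²} + ‖χ_{Ω₀} W·W_λ⁴‖_{L¹L²} ≤ C · λ^(−1/2), where Ω₀ = {(x,t) ∈ ℝ³ × ℝ : |x| > |t|} is the exterior of the main light cone. -/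
open MeasureTheory Real Set

noncomputable section

/-!
Both products are time independent, so at time `t` the inner integral over the exterior of the
light cone is a tail integral over `{|x| > |t|}`. Since `W² = (1/3 + |x|²)⁻¹` and
`W_λ² = λ / (λ²/3 + |x|²)`, we have `W² ≤ min (3 (1 + |x|²)⁻¹) |x|⁻²` and
`W_λ² ≤ min (3/λ) (λ/|x|²)`.

For `W⁴ W_λ` the factor `3/λ` comes out, and on `{|x| > |t|}` one factor `(1 + |x|²)⁻²` of
`(1 + |x|²)⁻⁴` is at most `(1 + t²)⁻²`; the square root of the tail is thus `≲ λ^(-1/2) (1 + t²)⁻¹`,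
with time integral `π`. For `W W_λ⁴` the tail is `≲ λ⁻² |t|⁻¹` for `|t| ≤ λ` and `≲ λ⁴ |t|⁻⁷` for
`|t| > λ`; both square roots integrate over their range of `t` to a multiple of `λ^(-1/2)`.
-/

section RadialTail

variable {E : Type*} [NormedAddCommGroup E] [NormedSpace ℝ E] [Nontrivial E]
  [FiniteDimensional ℝ E] [MeasurableSpace E] [BorelSpace E]
  (μ : Measure E) [μ.IsAddHaarMeasure]

omit [MeasurableSpace E] [BorelSpace E] in
lemma eqOn_pow_smul_indicator_rpow_neg (a r : ℝ) :
    EqOn (fun y : ℝ => y ^ (Module.finrank ℝ E - 1) • (Ioi r).indicator (· ^ (-a)) y)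
      ((Ioi r).indicator (· ^ ((Module.finrank ℝ E : ℝ) - 1 - a))) (Ioi 0) := by
  intro y (hy : 0 < y)
  by_cases hyr : y ∈ Ioi r
  · simp only [indicator_of_mem hyr, smul_eq_mul]
    rw [← Real.rpow_natCast, ← Real.rpow_add hy, Nat.cast_sub Module.finrank_pos]
    ring_nf
  · simp [indicator_of_notMem hyr]

lemma integrableOn_norm_rpow_neg {a r : ℝ} (ha : (Module.finrank ℝ E : ℝ) < a) (hr : 0 < r) :
    IntegrableOn (fun x : E => ‖x‖ ^ (-a)) {x | r < ‖x‖} μ := by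
  rw [← integrable_indicator_iff (measurableSet_lt measurable_const measurable_norm)]
  change Integrable (fun x => (Ioi r).indicator (· ^ (-a)) ‖x‖) μ
  rw [integrable_fun_norm_addHaar, integrableOn_congr_fun (eqOn_pow_smul_indicator_rpow_neg a r)
    measurableSet_Ioi, IntegrableOn, integrable_indicator_iff measurableSet_Ioi, IntegrableOn,
    Measure.restrict_restrict measurableSet_Ioi, inter_eq_left.mpr (Ioi_subset_Ioi hr.le)]
  exact integrableOn_Ioi_rpow_of_lt (by linarith) hr

lemma setIntegral_norm_rpow_neg {a r : ℝ} (ha : (Module.finrank ℝ E : ℝ) < a) (hr : 0 < r) :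
    ∫ x in {x | r < ‖x‖}, ‖x‖ ^ (-a) ∂μ =
      Module.finrank ℝ E * μ.real (Metric.ball 0 1) / (a - Module.finrank ℝ E) *
        r ^ ((Module.finrank ℝ E : ℝ) - a) := by
  rw [← integral_indicator (measurableSet_lt measurable_const measurable_norm)]
  change ∫ x, (Ioi r).indicator (· ^ (-a)) ‖x‖ ∂μ = _
  rw [integral_fun_norm_addHaar, setIntegral_congr_fun measurableSet_Ioi
    (eqOn_pow_smul_indicator_rpow_neg a r), integral_indicator measurableSet_Ioi,
    Measure.restrict_restrict measurableSet_Ioi, inter_eq_left.mpr (Ioi_subset_Ioi hr.le),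
    integral_Ioi_rpow_of_lt (by linarith) hr, nsmul_eq_mul, smul_eq_mul,
    show (Module.finrank ℝ E : ℝ) - 1 - a + 1 = Module.finrank ℝ E - a by ring,
    show a - Module.finrank ℝ E = -((Module.finrank ℝ E : ℝ) - a) by ring,
    div_neg]
  ring

end RadialTail

/-- No integrability of `u` is assumed: if the inner norms are not integrable in `t`, `L1L2 Ψ u`
is the junk value `0`. -/
lemma L1L2_le_integral_of_sq_le {Ψ : Set (EuclideanSpace ℝ (Fin 3) × ℝ)}
    {u : EuclideanSpace ℝ (Fin 3) → ℝ → ℝ} {g : ℝ → ℝ} (hg : Integrable g) (hg0 : ∀ t, 0 ≤ g t)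
    (hug : ∀ᵐ t, ∫ x in {x | (x, t) ∈ Ψ}, u x t ^ 2 ≤ g t ^ 2) :
    L1L2 Ψ u ≤ ∫ t, g t := by
  refine integral_mono_of_nonneg (.of_forall fun t => by positivity) hg ?_
  filter_upwards [hug] with t ht
  rw [← Real.sqrt_eq_rpow, ← Real.sqrt_sq (hg0 t)]
  exact Real.sqrt_le_sqrt ht

lemma IntegrableOn.integrable_comp_abs {f : ℝ → ℝ} (hf : IntegrableOn f (Ioi 0)) :
    Integrable (fun t => f |t|) := by
  have hIoi : IntegrableOn (fun t => f |t|) (Ioi 0) :=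
    hf.congr_fun (fun t (ht : 0 < t) => by rw [abs_of_pos ht]) measurableSet_Ioi
  have hIic : IntegrableOn (fun t => f |t|) (Iic 0) := by
    have hneg : MeasurableEmbedding fun t : ℝ => -t := (Homeomorph.neg ℝ).measurableEmbedding
    rw [← Measure.map_neg_eq_self (volume : Measure ℝ), hneg.integrableOn_map_iff]
    simp_rw [Function.comp_def, abs_neg, neg_preimage, neg_Iic, neg_zero]
    exact (integrableOn_Ici_iff_integrableOn_Ioi (by simp)).2 hIoi
  simpa [Iic_union_Ioi] using hIic.union hIoi

section TwoPowerProfile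

variable {L p q : ℝ} (a b : ℝ)

lemma integrableOn_Ioi_ite_rpow (hL : 0 < L) (hp : -1 < p) (hq : q < -1) :
    IntegrableOn (fun s => if s ≤ L then a * s ^ p else b * s ^ q) (Ioi 0) := by
  rw [← Ioc_union_Ioi_eq_Ioi hL.le]
  refine IntegrableOn.union ?_ ?_
  · exact IntegrableOn.congr_fun ((intervalIntegral.intervalIntegrable_rpow' hp).1.const_mul a)
      (fun s hs => by simp only [if_pos hs.2]) measurableSet_Ioc
  · exact IntegrableOn.congr_fun ((integrableOn_Ioi_rpow_of_lt hq hL).const_mul b)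
      (fun s (hs : L < s) => by simp only [if_neg hs.not_ge]) measurableSet_Ioi

lemma integrable_ite_abs_rpow (hL : 0 < L) (hp : -1 < p) (hq : q < -1) :
    Integrable (fun t => if |t| ≤ L then a * |t| ^ p else b * |t| ^ q) :=
  IntegrableOn.integrable_comp_abs (integrableOn_Ioi_ite_rpow a b hL hp hq)

lemma integral_ite_abs_rpow (hL : 0 < L) (hp : -1 < p) (hq : q < -1) :
    ∫ t, (if |t| ≤ L then a * |t| ^ p else b * |t| ^ q) =
      2 * (a * (L ^ (p + 1) / (p + 1)) + b * (-L ^ (q + 1) / (q + 1))) := by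
  have hint := integrableOn_Ioi_ite_rpow a b hL hp hq
  rw [integral_comp_abs (f := fun s => if s ≤ L then a * s ^ p else b * s ^ q),
    ← Ioc_union_Ioi_eq_Ioi hL.le, setIntegral_union (Ioc_disjoint_Ioi le_rfl) measurableSet_Ioi
      (hint.mono_set Ioc_subset_Ioi_self) (hint.mono_set (Ioi_subset_Ioi hL.le)),
    setIntegral_congr_fun measurableSet_Ioc (g := fun s => a * s ^ p)
      (fun s hs => by simp only [if_pos hs.2]),
    setIntegral_congr_fun measurableSet_Ioi (g := fun s => b * s ^ q)
      (fun s (hs : L < s) => by simp only [if_neg hs.not_ge]),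
    integral_const_mul, integral_const_mul, integral_Ioi_rpow_of_lt hq hL,
    ← intervalIntegral.integral_of_le hL.le, integral_rpow (.inl hp),
    Real.zero_rpow (by linarith), sub_zero]

end TwoPowerProfile

local notation "ℝ³" => EuclideanSpace ℝ (Fin 3)

lemma W3_sq (x : ℝ³) : W3 x ^ 2 = (1 / 3 + ‖x‖ ^ 2)⁻¹ := by
  rw [W3, ← Real.rpow_natCast, ← Real.rpow_mul (by positivity)]
  norm_num [Real.rpow_neg_one]

lemma Wlam_sq {lam : ℝ} (hlam : 0 < lam) (x : ℝ³) :
    Wlam lam x ^ 2 = lam / (lam ^ 2 / 3 + ‖x‖ ^ 2) := by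
  rw [Wlam, mul_pow, W3_sq, ← Real.rpow_natCast, ← Real.rpow_mul hlam.le, norm_smul,
    Real.norm_eq_abs, abs_inv, abs_of_pos hlam]
  norm_num [Real.rpow_neg_one]
  field_simp

lemma W3_sq_le (x : ℝ³) : W3 x ^ 2 ≤ 3 * (1 + ‖x‖ ^ 2)⁻¹ := by
  rw [W3_sq, show 3 * (1 + ‖x‖ ^ 2)⁻¹ = ((1 + ‖x‖ ^ 2) / 3)⁻¹ by field_simp]
  exact inv_anti₀ (by positivity) (by linarith [sq_nonneg ‖x‖])

lemma W3_sq_le_inv_norm_sq {x : ℝ³} (hx : x ≠ 0) : W3 x ^ 2 ≤ (‖x‖ ^ 2)⁻¹ := by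
  rw [W3_sq]
  exact inv_anti₀ (by positivity) (by linarith)

lemma Wlam_sq_le {lam : ℝ} (hlam : 0 < lam) (x : ℝ³) : Wlam lam x ^ 2 ≤ 3 / lam := by
  rw [Wlam_sq hlam, show 3 / lam = lam / (lam ^ 2 / 3) by field_simp]
  exact div_le_div_of_nonneg_left hlam.le (by positivity) (by linarith [sq_nonneg ‖x‖])

lemma Wlam_sq_le_div_norm_sq {lam : ℝ} (hlam : 0 < lam) {x : ℝ³} (hx : x ≠ 0) :
    Wlam lam x ^ 2 ≤ lam / ‖x‖ ^ 2 := by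
  rw [Wlam_sq hlam]
  exact div_le_div_of_nonneg_left hlam.le (by positivity) (by linarith [sq_nonneg lam])

lemma sq_W3_pow_four_mul_Wlam_le {lam : ℝ} (hlam : 0 < lam) (x : ℝ³) :
    (W3 x ^ 4 * Wlam lam x) ^ 2 ≤ 243 / lam * ((1 + ‖x‖ ^ 2)⁻¹) ^ 4 :=
  calc (W3 x ^ 4 * Wlam lam x) ^ 2 = (W3 x ^ 2) ^ 4 * Wlam lam x ^ 2 := by ring
    _ ≤ (3 * (1 + ‖x‖ ^ 2)⁻¹) ^ 4 * (3 / lam) := by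
      gcongr
      exacts [W3_sq_le x, Wlam_sq_le hlam x]
    _ = 243 / lam * ((1 + ‖x‖ ^ 2)⁻¹) ^ 4 := by ring

lemma sq_W3_mul_Wlam_pow_four_le_inv_sq {lam : ℝ} (hlam : 0 < lam) {x : ℝ³} (hx : x ≠ 0) :
    (W3 x * Wlam lam x ^ 4) ^ 2 ≤ 27 / lam ^ 2 * ‖x‖ ^ (-4 : ℝ) :=
  calc (W3 x * Wlam lam x ^ 4) ^ 2 = W3 x ^ 2 * (Wlam lam x ^ 2) ^ 3 * Wlam lam x ^ 2 := by ring
    _ ≤ (‖x‖ ^ 2)⁻¹ * (3 / lam) ^ 3 * (lam / ‖x‖ ^ 2) := by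
      gcongr
      exacts [W3_sq_le_inv_norm_sq hx, Wlam_sq_le hlam x, Wlam_sq_le_div_norm_sq hlam hx]
    _ = 27 / lam ^ 2 * ‖x‖ ^ (-4 : ℝ) := by
      rw [Real.rpow_neg (norm_nonneg x), show (4 : ℝ) = (4 : ℕ) by norm_num, Real.rpow_natCast]
      field_simp
      norm_num

lemma sq_W3_mul_Wlam_pow_four_le_pow_four {lam : ℝ} (hlam : 0 < lam) {x : ℝ³} (hx : x ≠ 0) :
    (W3 x * Wlam lam x ^ 4) ^ 2 ≤ lam ^ 4 * ‖x‖ ^ (-10 : ℝ) :=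
  calc (W3 x * Wlam lam x ^ 4) ^ 2 = W3 x ^ 2 * (Wlam lam x ^ 2) ^ 4 := by ring
    _ ≤ (‖x‖ ^ 2)⁻¹ * (lam / ‖x‖ ^ 2) ^ 4 := by
      gcongr
      exacts [W3_sq_le_inv_norm_sq hx, Wlam_sq_le_div_norm_sq hlam hx]
    _ = lam ^ 4 * ‖x‖ ^ (-10 : ℝ) := by
      rw [Real.rpow_neg (norm_nonneg x), show (10 : ℝ) = (10 : ℕ) by norm_num, Real.rpow_natCast]
      field_simp

lemma setIntegral_exterior_le_of_le_rpow {f : ℝ³ → ℝ} {c a r : ℝ} (ha : 3 < a) (hr : 0 < r)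
    (hf0 : ∀ x, 0 ≤ f x) (hf : ∀ x, r < ‖x‖ → f x ≤ c * ‖x‖ ^ (-a)) :
    ∫ x in {x | r < ‖x‖}, f x ≤
      c * (3 * volume.real (Metric.ball (0 : ℝ³) 1) / (a - 3) * r ^ (3 - a)) := by
  have hdim : (Module.finrank ℝ ℝ³ : ℝ) = 3 := by simp
  have hmeas : MeasurableSet {x : ℝ³ | r < ‖x‖} := measurableSet_lt measurable_const measurable_norm
  calc ∫ x in {x | r < ‖x‖}, f x ≤ ∫ x in {x | r < ‖x‖}, c * ‖x‖ ^ (-a) := by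
        refine integral_mono_of_nonneg (.of_forall hf0)
          ((integrableOn_norm_rpow_neg volume (by rwa [hdim]) hr).const_mul c) ?_
        filter_upwards [ae_restrict_mem hmeas] with x hx using hf x hx
    _ = _ := by rw [integral_const_mul, setIntegral_norm_rpow_neg volume (by rwa [hdim]) hr, hdim]

lemma setIntegral_exterior_sq_W3_pow_four_mul_Wlam_le {lam : ℝ} (hlam : 0 < lam) (t : ℝ) :
    ∫ x in {x : ℝ³ | |t| < ‖x‖}, (W3 x ^ 4 * Wlam lam x) ^ 2 ≤
      243 * (∫ x : ℝ³, ((1 + ‖x‖ ^ 2)⁻¹) ^ 2) / lam * ((1 + t ^ 2)⁻¹) ^ 2 := by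
  have hJ : Integrable fun x : ℝ³ => ((1 + ‖x‖ ^ 2)⁻¹) ^ 2 := by
    refine (integrable_rpow_neg_one_add_norm_sq (r := 4) (by simp; norm_num)).congr
      (.of_forall fun x => ?_)
    beta_reduce
    rw [show -(4 : ℝ) / 2 = -(2 : ℕ) by norm_num, Real.rpow_neg (by positivity),
      Real.rpow_natCast, inv_pow]
  set c := 243 / lam * ((1 + t ^ 2)⁻¹) ^ 2 with hc
  have hmeas : MeasurableSet {x : ℝ³ | |t| < ‖x‖} :=
    measurableSet_lt measurable_const measurable_norm
  calc ∫ x in {x : ℝ³ | |t| < ‖x‖}, (W3 x ^ 4 * Wlam lam x) ^ 2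
      ≤ ∫ x in {x : ℝ³ | |t| < ‖x‖}, c * ((1 + ‖x‖ ^ 2)⁻¹) ^ 2 := by
        refine integral_mono_of_nonneg (.of_forall fun x => by positivity)
          (hJ.const_mul c).integrableOn ?_
        filter_upwards [ae_restrict_mem hmeas] with x (hx : |t| < ‖x‖)
        have ht2 : t ^ 2 ≤ ‖x‖ ^ 2 := by
          simpa only [sq_abs] using pow_le_pow_left₀ (abs_nonneg t) hx.le 2
        have hJt : (1 + ‖x‖ ^ 2)⁻¹ ≤ (1 + t ^ 2)⁻¹ := inv_anti₀ (by positivity) (by linarith)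
        calc (W3 x ^ 4 * Wlam lam x) ^ 2 ≤ 243 / lam * ((1 + ‖x‖ ^ 2)⁻¹) ^ 4 :=
              sq_W3_pow_four_mul_Wlam_le hlam x
          _ = 243 / lam * ((1 + ‖x‖ ^ 2)⁻¹) ^ 2 * ((1 + ‖x‖ ^ 2)⁻¹) ^ 2 := by ring
          _ ≤ c * ((1 + ‖x‖ ^ 2)⁻¹) ^ 2 := by rw [hc]; gcongr
    _ ≤ ∫ x, c * ((1 + ‖x‖ ^ 2)⁻¹) ^ 2 :=
        setIntegral_le_integral (hJ.const_mul c) (.of_forall fun x => by positivity)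
    _ = _ := by rw [integral_const_mul]; ring

lemma L1L2_exterior_W3_pow_four_mul_Wlam_le {lam : ℝ} (hlam : 0 < lam) :
    L1L2 {p | |p.2| < ‖p.1‖} (fun x _ => W3 x ^ 4 * Wlam lam x) ≤
      √(243 * ∫ x : ℝ³, ((1 + ‖x‖ ^ 2)⁻¹) ^ 2) * π / √lam := by
  have hM : 0 ≤ ∫ x : ℝ³, ((1 + ‖x‖ ^ 2)⁻¹) ^ 2 := integral_nonneg fun x => by positivity
  calc _ ≤ ∫ t, √(243 * (∫ x : ℝ³, ((1 + ‖x‖ ^ 2)⁻¹) ^ 2) / lam) * (1 + t ^ 2)⁻¹ := by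
        refine L1L2_le_integral_of_sq_le (integrable_inv_one_add_sq.const_mul _)
          (fun t => by positivity) (.of_forall fun t => ?_)
        rw [mul_pow, Real.sq_sqrt (by positivity)]
        exact setIntegral_exterior_sq_W3_pow_four_mul_Wlam_le hlam t
    _ = _ := by
        rw [integral_const_mul, integral_univ_inv_one_add_sq, Real.sqrt_div' _ hlam.le]
        ring

lemma setIntegral_exterior_sq_W3_mul_Wlam_pow_four_le {lam t : ℝ} (hlam : 0 < lam) (ht : t ≠ 0) :
    ∫ x in {x : ℝ³ | |t| < ‖x‖}, (W3 x * Wlam lam x ^ 4) ^ 2 ≤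
      (if |t| ≤ lam then √(81 * volume.real (Metric.ball (0 : ℝ³) 1)) / lam * |t| ^ (-1 / 2 : ℝ)
        else √(3 * volume.real (Metric.ball (0 : ℝ³) 1) / 7) * lam ^ 2 * |t| ^ (-7 / 2 : ℝ)) ^ 2 := by
  have hV : 0 ≤ volume.real (Metric.ball (0 : ℝ³) 1) := measureReal_nonneg
  have hx : ∀ x : ℝ³, |t| < ‖x‖ → x ≠ 0 := fun x hx =>
    norm_pos_iff.1 ((abs_nonneg t).trans_lt hx)
  split_ifs
  · calc _ ≤ 27 / lam ^ 2 *
          (3 * volume.real (Metric.ball (0 : ℝ³) 1) / (4 - 3) * |t| ^ (3 - 4 : ℝ)) :=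
          setIntegral_exterior_le_of_le_rpow (by norm_num) (abs_pos.2 ht)
            (fun x => sq_nonneg _) fun x hxt => sq_W3_mul_Wlam_pow_four_le_inv_sq hlam (hx x hxt)
      _ = _ := by
          rw [mul_pow, div_pow, Real.sq_sqrt (by positivity),
            ← Real.rpow_mul_natCast (abs_nonneg t)]
          norm_num
          ring
  · calc _ ≤ lam ^ 4 *
          (3 * volume.real (Metric.ball (0 : ℝ³) 1) / (10 - 3) * |t| ^ (3 - 10 : ℝ)) :=
          setIntegral_exterior_le_of_le_rpow (by norm_num) (abs_pos.2 ht)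
            (fun x => sq_nonneg _) fun x hxt => sq_W3_mul_Wlam_pow_four_le_pow_four hlam (hx x hxt)
      _ = _ := by
          rw [mul_pow, mul_pow, Real.sq_sqrt (by positivity),
            ← Real.rpow_mul_natCast (abs_nonneg t)]
          norm_num
          ring

lemma L1L2_exterior_W3_mul_Wlam_pow_four_le {lam : ℝ} (hlam : 0 < lam) :
    L1L2 {p | |p.2| < ‖p.1‖} (fun x _ => W3 x * Wlam lam x ^ 4) ≤
      (4 * √(81 * volume.real (Metric.ball (0 : ℝ³) 1)) +
        4 / 5 * √(3 * volume.real (Metric.ball (0 : ℝ³) 1) / 7)) / √lam := by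
  set V := volume.real (Metric.ball (0 : ℝ³) 1)
  refine (L1L2_le_integral_of_sq_le
    (integrable_ite_abs_rpow (√(81 * V) / lam) (√(3 * V / 7) * lam ^ 2) (p := -1 / 2)
      (q := -7 / 2) hlam (by norm_num) (by norm_num))
    (fun t => by split_ifs <;> positivity) ?_).trans_eq ?_
  · filter_upwards [measure_eq_zero_iff_ae_notMem.1 (measure_singleton (0 : ℝ))] with t ht
      using setIntegral_exterior_sq_W3_mul_Wlam_pow_four_le hlam ht
  rw [integral_ite_abs_rpow _ _ hlam (by norm_num) (by norm_num)]
  obtain ⟨s, hs, rfl⟩ : ∃ s > 0, s ^ 2 = lam := ⟨√lam, by positivity, Real.sq_sqrt hlam.le⟩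
  rw [Real.sqrt_sq hs.le, ← Real.rpow_natCast_mul hs.le, ← Real.rpow_natCast_mul hs.le]
  norm_num
  field_simp
  ring

theorem stmt5 :
    ∃ C : ℝ, 0 < C ∧ ∀ lam : ℝ, 1 < lam →
      L1L2 {p | |p.2| < ‖p.1‖} (fun x _ => (W3 x)^4 * Wlam lam x) +
      L1L2 {p | |p.2| < ‖p.1‖} (fun x _ => W3 x * (Wlam lam x)^4)
        ≤ C * lam ^ (-(1:ℝ)/2) := by
  refine ⟨√(243 * ∫ x : ℝ³, ((1 + ‖x‖ ^ 2)⁻¹) ^ 2) * π +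
    (4 * √(81 * volume.real (Metric.ball (0 : ℝ³) 1)) +
      4 / 5 * √(3 * volume.real (Metric.ball (0 : ℝ³) 1) / 7)) + 1, by positivity, ?_⟩
  intro lam hlam
  have hlam0 : 0 < lam := one_pos.trans hlam
  have h1 := L1L2_exterior_W3_pow_four_mul_Wlam_le hlam0
  have h2 := L1L2_exterior_W3_mul_Wlam_pow_four_le hlam0
  have hsqrt : lam ^ (-(1:ℝ)/2) = (√lam)⁻¹ := by
    rw [Real.sqrt_eq_rpow, ← Real.rpow_neg hlam0.le]; norm_num
  calc _ ≤ _ := add_le_add h1 h2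
    _ ≤ _ := by
      rw [hsqrt, div_eq_mul_inv, div_eq_mul_inv, ← add_mul]
      exact mul_le_mul_of_nonneg_right (by linarith) (by positivity)
end
end

section
/- There is an absolute constant C > 0 with the following property. Let G ∈ L²(ℝ), let λ > 0, and suppose τ = (sup_{0<r<λ} (λ/r)·∫_{−r}^{r} |G(s)|² ds)^(1/2) + sup_{r>0} r^(−1/2)·∫_{−r}^{r} |G(s)| ds is finite. Then for all 0 ≤ r₁ < r₂ ≤ λ, the associated radial free wave v_L satisfies ‖χ_{Ω_{r₁,r₂}} v_L‖_Y ≤ C · ((r₂ − r₁)/λ)^(1/10) · τ. -/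
/-!
On the channel `|t| < |x|`, so `|v_L(x,t)| ≤ |x|⁻¹ ∫_{-(|t|+|x|)}^{|t|+|x|} |G|`. When
`2|x| ≤ λ`, Cauchy–Schwarz and the first part of `τ` bound this by `τ / √λ`; when `2|x| > λ`,
the second part bounds it by `τ / √|x|`. Either way `|v_L| ≤ 4 τ (λ + |t|)^(-1/2)` on the
channel. The time slice of `Ω_{r₁,r₂}` is a spherical shell of width `r₂ - r₁` and radius at
most `λ + |t|`, of volume `≲ (r₂ - r₁) (λ + |t|)²`, so the `L¹⁰` norm of the slice, raised to
the fifth power, is `≲ τ⁵ (r₂ - r₁)^(1/2) (λ + |t|)^(-3/2)`, whose integral in `t` is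
`≲ τ⁵ ((r₂ - r₁) / λ)^(1/2)`.
-/

open MeasureTheory Real Set

noncomputable section

open Filter Topology Module Metric

theorem integrable_rpow_add_abs {c a : ℝ} (hc : 0 < c) (ha : a < -1) :
    Integrable fun t : ℝ => (c + |t|) ^ a := by
  have h := ((integrable_one_add_norm (μ := volume) (E := ℝ) (r := -a)
    (by simp only [finrank_self, Nat.cast_one]; linarith)).comp_div hc.ne').const_mul (c ^ a)
  refine h.congr (ae_of_all _ fun t => ?_)
  simp only [neg_neg, Real.norm_eq_abs, abs_div, abs_of_pos hc]
  rw [← Real.mul_rpow hc.le (by positivity), mul_add, mul_one, mul_div_cancel₀ _ hc.ne']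

theorem integral_rpow_add_abs {c a : ℝ} (hc : 0 < c) (ha : a < -1) :
    ∫ t : ℝ, (c + |t|) ^ a = -2 * c ^ (a + 1) / (a + 1) := by
  have hderiv : ∀ u ∈ Ici (0:ℝ),
      HasDerivAt (fun u => (c + u) ^ (a + 1) / (a + 1)) ((c + u) ^ a) u := by
    intro u hu
    have hcu : 0 < c + u := by linarith [mem_Ici.mp hu]
    refine ((((hasDerivAt_id u).const_add c).rpow_const (p := a + 1)
      (Or.inl hcu.ne')).div_const (a + 1)).congr_deriv ?_
    field_simp [show a + 1 ≠ 0 by linarith]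
    simp
  have hlim : Tendsto (fun u => (c + u) ^ (a + 1) / (a + 1)) atTop (𝓝 0) := by
    have := (tendsto_rpow_neg_atTop (y := -(a + 1)) (by linarith)).comp
      (tendsto_atTop_add_const_left atTop c tendsto_id)
    simpa using this.div_const (a + 1)
  rw [integral_comp_abs (f := fun u => (c + u) ^ a),
    integral_Ioi_of_hasDerivAt_of_nonneg' hderiv (fun u hu => ?_) hlim]
  · rw [add_zero]
    ring
  · have : 0 < c + u := by linarith [mem_Ioi.mp hu]
    positivity

theorem addHaar_shell_le {E : Type*} [NormedAddCommGroup E] [NormedSpace ℝ E]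
    [MeasurableSpace E] [BorelSpace E] [FiniteDimensional ℝ E] (μ : Measure E)
    [μ.IsAddHaarMeasure] {a b : ℝ} (ha : 0 ≤ a) (hab : a < b) :
    μ {x : E | a < ‖x‖ ∧ ‖x‖ < b}
      ≤ ENNReal.ofReal (finrank ℝ E * (b - a) * b ^ (finrank ℝ E - 1)) * μ (ball 0 1) := by
  have hshell : {x : E | a < ‖x‖ ∧ ‖x‖ < b} = ball 0 b \ closedBall 0 a := by
    ext x
    simp [and_comm]
  have hpow : b ^ finrank ℝ E ≤ a ^ finrank ℝ E
      + finrank ℝ E * (b - a) * b ^ (finrank ℝ E - 1) := by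
    have := (le_abs_self _).trans (abs_pow_sub_pow_le b a (finrank ℝ E))
    rw [abs_of_pos (sub_pos.2 hab), abs_of_nonneg ha, abs_of_pos (ha.trans_lt hab),
      max_eq_left hab.le] at this
    linarith
  have hba := sub_nonneg.2 hab.le
  have hb := ha.trans hab.le
  rw [hshell, measure_sdiff_le_iff_le_add measurableSet_closedBall.nullMeasurableSet
    (closedBall_subset_ball hab) measure_closedBall_lt_top.ne,
    Measure.addHaar_ball_of_pos μ _ (ha.trans_lt hab), Measure.addHaar_closedBall μ _ ha,
    ← add_mul, ← ENNReal.ofReal_add (by positivity) (by positivity)]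
  gcongr

theorem intervalIntegral_abs_le_sqrt_mul_sqrt_integral_sq {f : ℝ → ℝ} (hf : MemLp f 2)
    {a b : ℝ} (hab : a ≤ b) : ∫ s in a..b, |f s| ≤ √(b - a) * √(∫ s in a..b, f s ^ 2) := by
  rw [intervalIntegral.integral_of_le hab, intervalIntegral.integral_of_le hab]
  have : IsFiniteMeasure (volume.restrict (Ioc a b)) :=
    isFiniteMeasure_restrict.mpr measure_Ioc_lt_top.ne
  have hf' : MemLp (fun s => |f s|) (ENNReal.ofReal 2) (volume.restrict (Ioc a b)) := by
    simpa using (hf.restrict _).norm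
  have hH := integral_mul_le_Lp_mul_Lq_of_nonneg Real.HolderConjugate.two_two
    (ae_of_all _ fun _ => abs_nonneg _) (ae_of_all _ fun _ => zero_le_one) hf' (memLp_const 1)
  simp only [mul_one, rpow_ofNat, sq_abs, one_pow, integral_const, MeasurableSet.univ,
    measureReal_restrict_apply, univ_inter, volume_real_Ioc, sub_nonneg, hab, sup_of_le_left,
    smul_eq_mul, ← Real.sqrt_eq_rpow] at hH
  linarith

theorem Ynorm_le_of_forall_abs_le {Ψ : Set (EuclideanSpace ℝ (Fin 3) × ℝ)}
    {u : EuclideanSpace ℝ (Fin 3) → ℝ → ℝ} {V M : ℝ → ℝ} (hV0 : ∀ t, 0 ≤ V t)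
    (hV : ∀ t, volume {x | (x, t) ∈ Ψ} ≤ ENNReal.ofReal (V t))
    (hM0 : ∀ t, 0 ≤ M t) (hM : ∀ x t, (x, t) ∈ Ψ → |u x t| ≤ M t)
    (hint : Integrable fun t => √(V t) * M t ^ 5) :
    Ynorm Ψ u ≤ (∫ t, √(V t) * M t ^ 5) ^ (1 / 5 : ℝ) := by
  have hslice : ∀ t,
      (∫ x in {x | (x, t) ∈ Ψ}, |u x t| ^ 10) ^ (1 / 2 : ℝ) ≤ √(V t) * M t ^ 5 := by
    intro t
    have hfin : volume {x | (x, t) ∈ Ψ} < ⊤ := (hV t).trans_lt ENNReal.ofReal_lt_top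
    have hinner := norm_setIntegral_le_of_norm_le_const (f := fun x => |u x t| ^ 10)
      (C := M t ^ 10) hfin fun x hx => by
        rw [Real.norm_of_nonneg (by positivity)]
        exact pow_le_pow_left₀ (abs_nonneg _) (hM x t hx) 10
    have hvol := ENNReal.toReal_le_of_le_ofReal (hV0 t) (hV t)
    calc (∫ x in {x | (x, t) ∈ Ψ}, |u x t| ^ 10) ^ (1 / 2 : ℝ)
        ≤ √(M t ^ 10 * V t) := by
          rw [← Real.sqrt_eq_rpow]
          gcongr
          exact (le_abs_self _).trans (hinner.trans (by gcongr; exact hvol))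
      _ = √(V t) * M t ^ 5 := by
          rw [show M t ^ 10 = (M t ^ 5) ^ 2 by ring, Real.sqrt_mul (by positivity),
            Real.sqrt_sq (pow_nonneg (hM0 t) 5), mul_comm]
  exact Real.rpow_le_rpow (integral_nonneg fun t => by positivity)
    (integral_mono_of_nonneg (ae_of_all _ fun t => by positivity) hint (ae_of_all _ hslice))
    (by norm_num)

theorem volume_channel_slice_le {r₁ r₂ lam : ℝ} (h1 : 0 ≤ r₁) (h12 : r₁ < r₂) (h2 : r₂ ≤ lam)
    (t : ℝ) : volume {x : EuclideanSpace ℝ (Fin 3) | (x, t) ∈ channel r₁ r₂}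
      ≤ ENNReal.ofReal (3 * volume.real (ball (0 : EuclideanSpace ℝ (Fin 3)) 1) * (r₂ - r₁)
        * (lam + |t|) ^ 2) := by
  have hshell := addHaar_shell_le (volume : Measure (EuclideanSpace ℝ (Fin 3)))
    (a := |t| + r₁) (b := |t| + r₂) (by positivity) (by linarith)
  rw [finrank_euclideanSpace_fin, add_sub_add_left_eq_sub] at hshell
  refine hshell.trans ?_
  have hδ := sub_nonneg.2 h12.le
  have hb : 0 ≤ |t| + r₂ := by linarith [abs_nonneg t]
  have hblam : |t| + r₂ ≤ lam + |t| := by linarith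
  rw [← ENNReal.ofReal_toReal measure_ball_lt_top.ne, ← ENNReal.ofReal_mul (by positivity)]
  refine ENNReal.ofReal_le_ofReal ?_
  calc _ = 3 * volume.real (ball (0 : EuclideanSpace ℝ (Fin 3)) 1) * (r₂ - r₁)
        * (|t| + r₂) ^ 2 := by rw [measureReal_def]; ring
    _ ≤ _ := by gcongr

section FreeWave

variable {G : ℝ → ℝ} {lam r : ℝ}

theorem abs_freeWave_le (hG : LocallyIntegrable G) (x : EuclideanSpace ℝ (Fin 3)) (t : ℝ) :
    |freeWave G x t| ≤ ‖x‖⁻¹ * ∫ s in -(|t| + ‖x‖)..(|t| + ‖x‖), |G s| := by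
  have hx := norm_nonneg x
  rw [freeWave, abs_mul, abs_inv, abs_norm]
  gcongr
  calc |∫ s in t - ‖x‖..t + ‖x‖, G s| ≤ ∫ s in t - ‖x‖..t + ‖x‖, |G s| :=
        intervalIntegral.abs_integral_le_integral_abs (by linarith)
    _ ≤ _ := intervalIntegral.integral_mono_interval (by linarith [neg_abs_le t])
        (by linarith) (by linarith [le_abs_self t]) (ae_of_all _ fun s => abs_nonneg _)
        (hG.integrableOn_isCompact isCompact_uIcc).intervalIntegrable.abs

theorem sSup_tauB_nonneg (hB : BddAbove (tauB G)) : 0 ≤ sSup (tauB G) :=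
  le_csSup_of_le hB ⟨1, one_pos, rfl⟩ <|
    div_nonneg (intervalIntegral.integral_nonneg (by norm_num) fun _ _ => abs_nonneg _)
      (Real.sqrt_nonneg _)

theorem intervalIntegral_abs_le_of_bddAbove_tauB (hB : BddAbove (tauB G)) (hr : 0 < r) :
    ∫ s in -r..r, |G s| ≤ sSup (tauB G) * √r := by
  have h := le_csSup hB ⟨r, hr, rfl⟩
  rwa [div_le_iff₀ (Real.sqrt_pos.mpr hr)] at h

theorem intervalIntegral_abs_le_of_bddAbove_tauA (hG : MemLp G 2) (hA : BddAbove (tauA G lam))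
    (hr : 0 < r) (hrlam : r < lam) :
    ∫ s in -r..r, |G s| ≤ r * √(2 * sSup (tauA G lam) / lam) := by
  have hlam := hr.trans hrlam
  have hsq : ∫ s in -r..r, G s ^ 2 ≤ sSup (tauA G lam) * r / lam := by
    have h := le_csSup hA ⟨r, hr, hrlam, rfl⟩
    rw [div_mul_eq_mul_div, div_le_iff₀ hr] at h
    rwa [le_div_iff₀ hlam, mul_comm]
  calc ∫ s in -r..r, |G s| ≤ √(r - -r) * √(∫ s in -r..r, G s ^ 2) :=
        intervalIntegral_abs_le_sqrt_mul_sqrt_integral_sq hG (by linarith)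
    _ ≤ √(2 * r) * √(sSup (tauA G lam) * r / lam) := by
        gcongr
        linarith
    _ = r * √(2 * sSup (tauA G lam) / lam) := by
        rw [← Real.sqrt_mul (by positivity), ← Real.sqrt_sq hr.le, ← Real.sqrt_mul (sq_nonneg r),
          Real.sqrt_sq hr.le]
        ring_nf

theorem abs_freeWave_mul_sqrt_le (hG : MemLp G 2) (hA : BddAbove (tauA G lam))
    (hB : BddAbove (tauB G)) {x : EuclideanSpace ℝ (Fin 3)} {t : ℝ} (hxt : |t| < ‖x‖) :
    |freeWave G x t| * √(lam + |t|) ≤ 4 * tau G lam := by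
  set ρ := ‖x‖
  have hρ : 0 < ρ := (abs_nonneg t).trans_lt hxt
  have hr : 0 < |t| + ρ := by positivity
  have hv := abs_freeWave_le (hG.locallyIntegrable one_le_two) x t
  have hB0 := sSup_tauB_nonneg hB
  rcases le_or_gt (2 * ρ) lam with hsmall | hlarge
  · have h := intervalIntegral_abs_le_of_bddAbove_tauA hG hA hr (by linarith)
    have hlam : 0 < lam := by linarith
    calc |freeWave G x t| * √(lam + |t|)
        ≤ (ρ⁻¹ * (2 * ρ * √(2 * sSup (tauA G lam) / lam))) * √(2 * lam) := by
          gcongr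
          · exact hv.trans (by gcongr; exact h.trans (by gcongr; linarith))
          · linarith
      _ = 4 * √(sSup (tauA G lam)) := by
          rw [mul_assoc, mul_assoc, mul_assoc, ← Real.sqrt_mul' _ (by positivity),
            show 2 * sSup (tauA G lam) / lam * (2 * lam) = 2 ^ 2 * sSup (tauA G lam) by
              field_simp,
            Real.sqrt_mul (by positivity), Real.sqrt_sq (by norm_num)]
          field_simp
          ring
      _ ≤ 4 * tau G lam := by unfold tau; linarith
  · have h := intervalIntegral_abs_le_of_bddAbove_tauB hB hr
    calc |freeWave G x t| * √(lam + |t|)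
        ≤ (ρ⁻¹ * (sSup (tauB G) * √(2 * ρ))) * √(3 * ρ) := by
          gcongr
          · exact hv.trans (by gcongr; exact h.trans (by gcongr; linarith))
          · linarith
      _ = √6 * sSup (tauB G) := by
          rw [mul_assoc, mul_assoc, ← Real.sqrt_mul (by positivity),
            show 2 * ρ * (3 * ρ) = ρ ^ 2 * 6 by ring, Real.sqrt_mul (by positivity),
            Real.sqrt_sq hρ.le]
          field_simp
      _ ≤ 4 * tau G lam := by
          have : √6 ≤ 4 := by rw [Real.sqrt_le_left (by norm_num)]; norm_num
          unfold tau
          nlinarith [Real.sqrt_nonneg (sSup (tauA G lam))]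

theorem abs_freeWave_le_of_abs_lt_norm (hG : MemLp G 2) (hlam : 0 < lam)
    (hA : BddAbove (tauA G lam)) (hB : BddAbove (tauB G)) {x : EuclideanSpace ℝ (Fin 3)} {t : ℝ}
    (hxt : |t| < ‖x‖) : |freeWave G x t| ≤ 4 * tau G lam * (lam + |t|) ^ (-(1 / 2 : ℝ)) := by
  have hw : 0 < lam + |t| := by positivity
  rw [Real.rpow_neg hw.le, ← Real.sqrt_eq_rpow, ← div_eq_mul_inv,
    le_div_iff₀ (Real.sqrt_pos.2 hw)]
  exact abs_freeWave_mul_sqrt_le hG hA hB hxt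

theorem Ynorm_channel_freeWave_le {r₁ r₂ : ℝ} (hG : MemLp G 2)
    (hlam : 0 < lam) (hA : BddAbove (tauA G lam)) (hB : BddAbove (tauB G)) (h1 : 0 ≤ r₁)
    (h12 : r₁ < r₂) (h2 : r₂ ≤ lam) :
    Ynorm (channel r₁ r₂) (freeWave G)
      ≤ (4 ^ 6 * √(3 * volume.real (ball (0 : EuclideanSpace ℝ (Fin 3)) 1))
          * √((r₂ - r₁) / lam) * tau G lam ^ 5) ^ (1 / 5 : ℝ) := by
  set ω := volume.real (ball (0 : EuclideanSpace ℝ (Fin 3)) 1)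
  have hτ : 0 ≤ tau G lam := add_nonneg (Real.sqrt_nonneg _) (sSup_tauB_nonneg hB)
  have hδ : 0 < r₂ - r₁ := sub_pos.2 h12
  have hprofile : (fun t : ℝ => √(3 * ω * (r₂ - r₁) * (lam + |t|) ^ 2)
        * (4 * tau G lam * (lam + |t|) ^ (-(1 / 2 : ℝ))) ^ 5)
      = fun t => 4 ^ 5 * tau G lam ^ 5 * √(3 * ω * (r₂ - r₁)) * (lam + |t|) ^ (-(3 / 2 : ℝ)) := by
    funext t
    have hw : 0 < lam + |t| := by positivity
    have hpow : (lam + |t|) * ((lam + |t|) ^ (-(1 / 2 : ℝ))) ^ 5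
        = (lam + |t|) ^ (-(3 / 2 : ℝ)) := by
      rw [← Real.rpow_natCast, ← Real.rpow_mul hw.le, ← Real.rpow_one_add' hw.le (by norm_num)]
      norm_num
    rw [Real.sqrt_mul (by positivity), Real.sqrt_sq hw.le, ← hpow]
    ring
  have hY := Ynorm_le_of_forall_abs_le (Ψ := channel r₁ r₂) (u := freeWave G)
    (fun t => by positivity) (volume_channel_slice_le h1 h12 h2) (fun t => by positivity)
    (fun x t hxt => abs_freeWave_le_of_abs_lt_norm hG hlam hA hB (by linarith [hxt.1]))
    (by rw [hprofile]; exact (integrable_rpow_add_abs hlam (by norm_num)).const_mul _)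
  rw [hprofile, integral_const_mul, integral_rpow_add_abs hlam (by norm_num)] at hY
  refine hY.trans_eq (congrArg (· ^ (1 / 5 : ℝ)) ?_)
  rw [Real.sqrt_mul (by positivity), Real.sqrt_div' _ hlam.le,
    show -(3 / 2 : ℝ) + 1 = -(1 / 2) by norm_num, Real.rpow_neg hlam.le, ← Real.sqrt_eq_rpow]
  field_simp
  ring

end FreeWave

theorem stmt10 :
    ∃ C : ℝ, 0 < C ∧ ∀ (G : ℝ → ℝ) (lam r₁ r₂ : ℝ),
      MemLp G 2 (volume : Measure ℝ) → 0 < lam →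
      BddAbove (tauA G lam) → BddAbove (tauB G) →
      0 ≤ r₁ → r₁ < r₂ → r₂ ≤ lam →
      Ynorm (channel r₁ r₂) (freeWave G)
        ≤ C * ((r₂ - r₁) / lam) ^ ((1:ℝ)/10) * tau G lam := by
  have hω : 0 < volume.real (ball (0 : EuclideanSpace ℝ (Fin 3)) 1) :=
    ENNReal.toReal_pos (measure_ball_pos _ _ one_pos).ne' measure_ball_lt_top.ne
  refine ⟨(4 ^ 6 * √(3 * volume.real (ball (0 : EuclideanSpace ℝ (Fin 3)) 1))) ^ (1 / 5 : ℝ),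
    by positivity, fun G lam r₁ r₂ hG hlam hA hB h1 h12 h2 => ?_⟩
  have hτ : 0 ≤ tau G lam := add_nonneg (Real.sqrt_nonneg _) (sSup_tauB_nonneg hB)
  have hθ : 0 ≤ (r₂ - r₁) / lam := div_nonneg (sub_nonneg.2 h12.le) hlam.le
  refine (Ynorm_channel_freeWave_le hG hlam hA hB h1 h12 h2).trans_eq ?_
  rw [Real.sqrt_eq_rpow ((r₂ - r₁) / lam), Real.mul_rpow (by positivity) (by positivity),
    Real.mul_rpow (by positivity) (by positivity), ← Real.rpow_mul hθ,
    ← Real.rpow_natCast (tau G lam) 5, ← Real.rpow_mul hτ]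
  norm_num
end
end
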